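/- arXiv:2010.07924 — 4 statements merged into one kernel-verified Lean document; each statement's English description precedes it below -/
import Mathlib

section
/- Let λ denote the Liouville function (extended as an even function to ℤ with λ(0)=1). If integers x, y, z satisfy xy + yz + zx - 1 ≠ 0 and (xy + yz + zx - 1) divides (xyz - x - y - z), then λ(x²+1)·λ(y²+1)·λ(z²+1) = λ(((xyz - x - y - z)/(xy + yz + zx - 1))² + 1). -/
/-- The Liouville function, extended as an even function to `ℤ` with `λ 0 = 1`. -/
noncomputable def liouvilleZ (n : ℤ) : ℤ :=
  (-1) ^ (ArithmeticFunction.cardFactors n.natAbs)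

lemma liouvilleZ_mul {a b : ℤ} (ha : a ≠ 0) (hb : b ≠ 0) :
    liouvilleZ (a * b) = liouvilleZ a * liouvilleZ b := by
  unfold liouvilleZ
  rw [Int.natAbs_mul, ArithmeticFunction.cardFactors_mul
    (Int.natAbs_ne_zero.mpr ha) (Int.natAbs_ne_zero.mpr hb), pow_add]

lemma liouvilleZ_sq_mul {d m : ℤ} (hd : d ≠ 0) (hm : m ≠ 0) :
    liouvilleZ (d ^ 2 * m) = liouvilleZ m := by
  have hd2 : d ^ 2 ≠ 0 := pow_ne_zero _ hd
  rw [liouvilleZ_mul hd2 hm, sq, liouvilleZ_mul hd hd]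
  have : liouvilleZ d * liouvilleZ d = 1 := by
    unfold liouvilleZ
    rw [← pow_add, ← two_mul, pow_mul]
    norm_num
  rw [this, one_mul]

theorem stmt_2 (x y z : ℤ)
    (hne : x * y + y * z + z * x - 1 ≠ 0)
    (hdvd : (x * y + y * z + z * x - 1) ∣ (x * y * z - x - y - z)) :
    liouvilleZ (x ^ 2 + 1) * liouvilleZ (y ^ 2 + 1) * liouvilleZ (z ^ 2 + 1) =
      liouvilleZ (((x * y * z - x - y - z) / (x * y + y * z + z * x - 1)) ^ 2 + 1) := by
  obtain ⟨k, hk⟩ := hdvd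
  rw [hk, Int.mul_ediv_cancel_left _ hne]
  have hx : x ^ 2 + 1 ≠ 0 := by positivity
  have hy : y ^ 2 + 1 ≠ 0 := by positivity
  have hz : z ^ 2 + 1 ≠ 0 := by positivity
  have hk1 : k ^ 2 + 1 ≠ 0 := by positivity
  have key : (x ^ 2 + 1) * (y ^ 2 + 1) * (z ^ 2 + 1)
      = (x * y + y * z + z * x - 1) ^ 2 * (k ^ 2 + 1) := by
    have : (x ^ 2 + 1) * (y ^ 2 + 1) * (z ^ 2 + 1)
        = (x * y * z - x - y - z) ^ 2 + (x * y + y * z + z * x - 1) ^ 2 := by ring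
    rw [this, hk]; ring
  calc liouvilleZ (x ^ 2 + 1) * liouvilleZ (y ^ 2 + 1) * liouvilleZ (z ^ 2 + 1)
      = liouvilleZ ((x ^ 2 + 1) * (y ^ 2 + 1) * (z ^ 2 + 1)) := by
        rw [liouvilleZ_mul (mul_ne_zero hx hy) hz, liouvilleZ_mul hx hy]
    _ = liouvilleZ (k ^ 2 + 1) := by rw [key, liouvilleZ_sq_mul hne hk1]
end

section
/- Let 1 ≤ m ≤ n be integers and let w₁, ..., wₙ ∈ [0,1] be real numbers with w₁ + ... + wₙ = m. Then |Σ_{j=1}^{n} wⱼ · e(j/n)| ≤ |Σ_{j=1}^{m} e(j/n)|, where e(t) = exp(2πit). -/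
/-!
Write `ζ = e(1/n)` and rotate the sum `S = ∑ wⱼ ζʲ` onto the positive real axis, so that
`‖S‖ = ∑ wⱼ cos (2π (j - s) / n)` for a phase `s`. Read modulo `n`, the `m` consecutive indices
closest to `s` are those where this cosine is at least `cos (π m / n)`, and it is at most that
value elsewhere. As the weights lie in `[0, 1]` and sum to `m`, moving all weight onto that
window can only increase the sum (bathtub principle), and the window sum of cosines is the real
part of a rotated copy of `∑_{j ≤ m} ζʲ`.
-/

open Complex Finset Real

theorem Finset.sum_mul_le_sum_of_subset {ι : Type*} [DecidableEq ι] {s B : Finset ι} (hBs : B ⊆ s)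
    {t c : ι → ℝ} {l : ℝ} (ht₁ : ∀ i ∈ B, t i ≤ 1) (ht₀ : ∀ i ∈ s \ B, 0 ≤ t i)
    (hsum : ∑ i ∈ s, t i = #B) (hB : ∀ i ∈ B, l ≤ c i) (hC : ∀ i ∈ s \ B, c i ≤ l) :
    ∑ i ∈ s, t i * c i ≤ ∑ i ∈ B, c i := by
  have hin : ∑ i ∈ B, (t i - 1) * c i ≤ ∑ i ∈ B, (t i - 1) * l :=
    sum_le_sum fun i hi => mul_le_mul_of_nonpos_left (hB i hi) (by linarith [ht₁ i hi])
  have hout : ∑ i ∈ s \ B, t i * c i ≤ ∑ i ∈ s \ B, t i * l :=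
    sum_le_sum fun i hi => mul_le_mul_of_nonneg_left (hC i hi) (ht₀ i hi)
  rw [← sum_sdiff hBs] at hsum ⊢
  simp only [sub_mul, one_mul, sum_sub_distrib, ← sum_mul, sum_const, nsmul_eq_mul] at hin hout
  linear_combination hin + hout + l * hsum

theorem Finset.sum_Icc_one_eq_sum_range {M : Type*} [AddCommMonoid M] (f : ℕ → M) (p : ℕ) :
    ∑ j ∈ Icc 1 p, f j = ∑ k ∈ range p, f (1 + k) := by
  rw [← Ico_add_one_right_eq_Icc, sum_Ico_eq_sum_range, Nat.add_sub_cancel]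

theorem Function.Periodic.sum_range_add {M : Type*} [AddCommMonoid M] {f : ℕ → M} {n : ℕ}
    (hf : Function.Periodic f n) (a : ℕ) : ∑ k ∈ range n, f (a + k) = ∑ k ∈ range n, f k := by
  induction a with
  | zero => simp
  | succ a ih =>
    rw [← ih]
    cases n with
    | zero => simp
    | succ n =>
      rw [sum_range_succ, sum_range_succ', add_zero, ← hf a]
      simp only [add_assoc, add_comm 1]

theorem Real.cos_le_cos_of_abs_le {x y : ℝ} (hxy : |x| ≤ y) (hy : y ≤ π) : cos y ≤ cos x := by
  rw [← cos_abs x]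
  exact cos_le_cos_of_nonneg_of_le_pi (abs_nonneg x) hy hxy

theorem Real.cos_le_cos_of_le_of_le_two_pi_sub {x y : ℝ} (hy : 0 ≤ y) (hyx : y ≤ x)
    (hx : x ≤ 2 * π - y) : cos x ≤ cos y := by
  rcases le_total x π with hxπ | hπx
  · exact cos_le_cos_of_nonneg_of_le_pi hy hxπ hyx
  · rw [← cos_two_pi_sub]
    exact cos_le_cos_of_nonneg_of_le_pi hy (by linarith) (by linarith)

section Window

variable {m n a k : ℕ} {s : ℝ}

theorem cos_pi_mul_div_le_cos_of_lt (hn : 0 < n) (hmn : m ≤ n) (ha₁ : s - m / 2 ≤ a)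
    (ha₂ : a < s - m / 2 + 1) (hkm : k < m) :
    Real.cos (π * m / n) ≤ Real.cos (2 * π * ((a + k : ℕ) - s) / n) := by
  have hn' : (0 : ℝ) < n := Nat.cast_pos.2 hn
  have hk : (k : ℝ) + 1 ≤ m := by exact_mod_cast hkm
  have hx : |((a + k : ℕ) : ℝ) - s| ≤ m / 2 := by
    push_cast
    exact abs_le.2 ⟨by linarith [k.cast_nonneg (α := ℝ)], by linarith⟩
  refine cos_le_cos_of_abs_le ?_ ?_
  · rw [abs_div, abs_mul, abs_of_pos two_pi_pos, abs_of_pos hn']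
    calc 2 * π * |((a + k : ℕ) : ℝ) - s| / n ≤ 2 * π * (m / 2) / n := by gcongr
      _ = π * m / n := by ring
  · rw [div_le_iff₀ hn']
    exact mul_le_mul_of_nonneg_left (by exact_mod_cast hmn) pi_pos.le

theorem cos_le_cos_pi_mul_div_of_le_of_lt (hn : 0 < n) (ha₁ : s - m / 2 ≤ a)
    (ha₂ : a < s - m / 2 + 1) (hmk : m ≤ k) (hkn : k < n) :
    Real.cos (2 * π * ((a + k : ℕ) - s) / n) ≤ Real.cos (π * m / n) := by
  have hn' : (0 : ℝ) < n := Nat.cast_pos.2 hn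
  have hm : (m : ℝ) ≤ k := by exact_mod_cast hmk
  have hk : (k : ℝ) + 1 ≤ n := by exact_mod_cast hkn
  push_cast
  refine cos_le_cos_of_le_of_le_two_pi_sub (by positivity) ?_ ?_
  · rw [div_le_div_iff_of_pos_right hn']
    nlinarith [pi_pos]
  · rw [show 2 * π - π * m / n = 2 * π * (n - m / 2) / n by field_simp,
      div_le_div_iff_of_pos_right hn']
    nlinarith [pi_pos]

end Window

-- The phase is taken in `[n/2, 3n/2)` so that the window starts at a natural number.
theorem Complex.exists_norm_eq_re_exp_mul (z : ℂ) {n : ℝ} (hn : 0 < n) :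
    ∃ s : ℝ, n / 2 ≤ s ∧ ‖z‖ = (exp (-(2 * π * I * s / n)) * z).re := by
  refine ⟨n * (arg z + 2 * π) / (2 * π), ?_, ?_⟩
  · rw [le_div_iff₀ two_pi_pos]
    nlinarith [neg_pi_lt_arg z, pi_pos]
  · have hn' : (n : ℂ) ≠ 0 := ofReal_ne_zero.2 hn.ne'
    have : -(2 * π * I * ((n * (arg z + 2 * π) / (2 * π) : ℝ) : ℂ) / n) =
        -(arg z * I) + (-1 : ℤ) * (2 * π * I) := by
      push_cast
      field_simp
      ring
    have hz : exp (-(arg z * I)) * z = ‖z‖ := by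
      calc exp (-(arg z * I)) * z = exp (-(arg z * I)) * (‖z‖ * exp (arg z * I)) := by
            rw [norm_mul_exp_arg_mul_I]
        _ = ‖z‖ := by rw [mul_left_comm, ← exp_add, neg_add_cancel, exp_zero, mul_one]
    rw [this, exp_add, exp_int_mul_two_pi_mul_I, mul_one, hz, ofReal_re]

theorem Complex.re_exp_mul_exp_pow (n k : ℕ) (s : ℝ) :
    (exp (-(2 * π * I * s / n)) * exp (2 * π * I / n) ^ k).re = Real.cos (2 * π * (k - s) / n) := by
  rw [← Complex.exp_nat_mul, ← exp_add, ← exp_ofReal_mul_I_re]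
  congr 2
  push_cast
  ring

theorem norm_sum_mul_exp_pow_le {m n : ℕ} (hmn : m ≤ n) {t : ℕ → ℝ}
    (ht : ∀ k < n, t k ∈ Set.Icc (0 : ℝ) 1) (hsum : ∑ k ∈ range n, t k = m) :
    ‖∑ k ∈ range n, (t k : ℂ) * exp (2 * π * I / n) ^ k‖ ≤
      ‖∑ k ∈ range m, exp (2 * π * I / n) ^ k‖ := by
  rcases n.eq_zero_or_pos with rfl | hn
  · obtain rfl : m = 0 := by omega
    simp
  set ζ := exp (2 * π * I / n)
  have hζ : IsPrimitiveRoot ζ n := isPrimitiveRoot_exp n hn.ne'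
  obtain ⟨s, hs, hnorm⟩ :=
    exists_norm_eq_re_exp_mul (∑ k ∈ range n, (t k : ℂ) * ζ ^ k) (Nat.cast_pos.2 hn)
  set u := exp (-(2 * π * I * s / n))
  set c : ℕ → ℝ := fun k => (u * ζ ^ k).re
  have hc_cos (k : ℕ) : c k = Real.cos (2 * π * (k - s) / n) := re_exp_mul_exp_pow n k s
  have hc_per : Function.Periodic c n := fun k => by
    simp only [c, pow_add, hζ.pow_eq_one, mul_one]
  have ht_per : Function.Periodic (fun k => t (k % n)) n := fun k => by simp
  -- The window `a, …, a + m - 1` is centred at `s`.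
  set a := ⌈s - m / 2⌉₊
  have hs' : 0 ≤ s - m / 2 := by
    have : (m : ℝ) ≤ n := by exact_mod_cast hmn
    linarith
  have ha₁ : s - m / 2 ≤ a := Nat.le_ceil _
  have ha₂ : (a : ℝ) < s - m / 2 + 1 := Nat.ceil_lt_add_one hs'
  have ht_mod (k : ℕ) : t ((a + k) % n) ∈ Set.Icc (0 : ℝ) 1 := ht _ (Nat.mod_lt _ hn)
  calc ‖∑ k ∈ range n, (t k : ℂ) * ζ ^ k‖
      = ∑ k ∈ range n, t (k % n) * c k := by
        rw [hnorm, ofReal_natCast, mul_sum, re_sum]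
        refine sum_congr rfl fun k hk => ?_
        rw [Nat.mod_eq_of_lt (mem_range.1 hk), mul_left_comm, re_ofReal_mul]
    _ = ∑ k ∈ range n, t ((a + k) % n) * c (a + k) :=
        ((ht_per.mul hc_per).sum_range_add a).symm
    _ ≤ ∑ k ∈ range m, c (a + k) := by
        refine sum_mul_le_sum_of_subset (range_subset_range.2 hmn) (l := Real.cos (π * m / n))
          (fun k _ => (ht_mod k).2) (fun k _ => (ht_mod k).1) ?_ ?_ ?_
        · rw [ht_per.sum_range_add a, card_range, ← hsum]
          exact sum_congr rfl fun k hk => by rw [Nat.mod_eq_of_lt (mem_range.1 hk)]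
        · intro k hk
          rw [hc_cos]
          exact cos_pi_mul_div_le_cos_of_lt hn hmn ha₁ ha₂ (mem_range.1 hk)
        · intro k hk
          simp only [mem_sdiff, mem_range, not_lt] at hk
          rw [hc_cos]
          exact cos_le_cos_pi_mul_div_of_le_of_lt hn ha₁ ha₂ hk.2 hk.1
    _ = (u * ζ ^ a * ∑ k ∈ range m, ζ ^ k).re := by
        simp only [c, mul_sum, re_sum, pow_add, mul_assoc]
    _ ≤ ‖∑ k ∈ range m, ζ ^ k‖ := by
        refine (re_le_norm _).trans_eq ?_
        rw [norm_mul, norm_mul, norm_pow, hζ.norm'_eq_one hn.ne', one_pow, mul_one, norm_exp]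
        simp

theorem stmt_3_general (m n : ℕ) (hmn : m ≤ n) (w : ℕ → ℝ)
    (hw : ∀ j ∈ Finset.Icc 1 n, w j ∈ Set.Icc (0 : ℝ) 1)
    (hsum : ∑ j ∈ Finset.Icc 1 n, w j = m) :
    ‖∑ j ∈ Finset.Icc 1 n, (w j : ℂ) * Complex.exp (2 * Real.pi * Complex.I * (j / n))‖ ≤
      ‖∑ j ∈ Finset.Icc 1 m, Complex.exp (2 * Real.pi * Complex.I * (j / n))‖ := by
  have hpow (j : ℕ) : exp (2 * π * I * (j / n)) = exp (2 * π * I / n) ^ j := by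
    rw [← Complex.exp_nat_mul]; ring_nf
  have hnorm_pow : ‖exp (2 * π * I / n)‖ = 1 := by
    rw [norm_exp]; simp
  rw [sum_Icc_one_eq_sum_range] at hsum
  simp_rw [sum_Icc_one_eq_sum_range, hpow, pow_add, pow_one,
    mul_left_comm _ (exp (2 * π * I / n)), ← mul_sum, norm_mul, hnorm_pow, one_mul]
  exact norm_sum_mul_exp_pow_le hmn (fun k hk => hw _ (by simp; omega)) hsum

theorem stmt_3 (m n : ℕ) (hm : 1 ≤ m) (hmn : m ≤ n) (w : ℕ → ℝ)
    (hw : ∀ j ∈ Finset.Icc 1 n, w j ∈ Set.Icc (0 : ℝ) 1)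
    (hsum : ∑ j ∈ Finset.Icc 1 n, w j = m) :
    ‖∑ j ∈ Finset.Icc 1 n, (w j : ℂ) * Complex.exp (2 * Real.pi * Complex.I * (j / n))‖ ≤
      ‖∑ j ∈ Finset.Icc 1 m, Complex.exp (2 * Real.pi * Complex.I * (j / n))‖ :=
  stmt_3_general m n hmn w hw hsum
end

section
/- Let χ be a real Dirichlet character modulo q where every prime factor of q is ≡ 3 (mod 4), and let e(t) = exp(2πit). Then the function ψ(x) = (-1)^{rx}·χ(4x² + 1), for any r ∈ {0,1}, satisfies: ψ(x)ψ(y)ψ(z) = ψ((4xyz - x - y - z)/(4(xy+yz+zx) - 1)) whenever the integers x,y,z are such that 4(xy+yz+zx) - 1 divides 4xyz - x - y - z and 4(xy+yz+zx) - 1 ≠ 0. -/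
private lemma aux_isUnit_cast (q : ℕ) (a : ℤ)
    (h : ∀ p : ℕ, p.Prime → p ∣ q → ¬ ((p : ℤ) ∣ a)) : IsUnit ((a : ZMod q)) := by
  have key : IsUnit ((a.natAbs : ZMod q)) := by
    rw [ZMod.isUnit_iff_coprime]
    by_contra hg
    obtain ⟨p, pp, hpd⟩ := Nat.exists_prime_and_dvd hg
    exact h p pp (hpd.trans (Nat.gcd_dvd_right _ _))
      ((Int.natCast_dvd_natCast.mpr (hpd.trans (Nat.gcd_dvd_left _ _))).trans
        (Int.natAbs_dvd.mpr dvd_rfl))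
  rcases Int.natAbs_eq a with h1 | h1
  · rw [h1, Int.cast_natCast]; exact key
  · rw [h1, Int.cast_neg, Int.cast_natCast]; exact key.neg

theorem stmt_9 (q : ℕ) (hq3 : ∀ p : ℕ, p.Prime → p ∣ q → p % 4 = 3)
    (χ : DirichletCharacter ℤ q) (r : ℕ) (hr : r = 0 ∨ r = 1)
    (ψ : ℤ → ℤ)
    (hψ : ∀ t : ℤ, ψ t = (-1) ^ (r * t.natAbs) * χ ((4 * t ^ 2 + 1 : ℤ) : ZMod q))
    (x y z : ℤ)
    (hne : 4 * (x * y + y * z + z * x) - 1 ≠ 0)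
    (hdvd : (4 * (x * y + y * z + z * x) - 1) ∣ (4 * x * y * z - x - y - z)) :
    ψ x * ψ y * ψ z =
      ψ ((4 * x * y * z - x - y - z) / (4 * (x * y + y * z + z * x) - 1)) := by
  obtain ⟨w, hw⟩ := hdvd
  have hdiv : (4 * x * y * z - x - y - z) / (4 * (x * y + y * z + z * x) - 1) = w := by
    rw [hw, Int.mul_ediv_cancel_left _ hne]
  rw [hdiv]
  -- no prime divisor of q divides 4t^2+1
  have hsq : ∀ (t : ℤ) (p : ℕ), p.Prime → p ∣ q → ¬ ((p : ℤ) ∣ (4 * t ^ 2 + 1)) := by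
    intro t p pp hpq hdvd'
    haveI : Fact p.Prime := ⟨pp⟩
    have h0 : ((4 * t ^ 2 + 1 : ℤ) : ZMod p) = 0 :=
      (ZMod.intCast_zmod_eq_zero_iff_dvd _ _).mpr hdvd'
    push_cast at h0
    have hsq' : IsSquare (-1 : ZMod p) := ⟨2 * (t : ZMod p), by linear_combination -h0⟩
    exact ZMod.exists_sq_eq_neg_one_iff.mp hsq' (hq3 p pp hpq)
  -- no prime divisor of q divides 4S-1
  have hS : ∀ p : ℕ, p.Prime → p ∣ q → ¬ ((p : ℤ) ∣ (4 * (x * y + y * z + z * x) - 1)) := by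
    intro p pp hpq hd
    haveI : Fact p.Prime := ⟨pp⟩
    have h0 : ((4 * (x * y + y * z + z * x) - 1 : ℤ) : ZMod p) = 0 :=
      (ZMod.intCast_zmod_eq_zero_iff_dvd _ _).mpr hd
    have hid : ((4 * x ^ 2 + 1) * (4 * y ^ 2 + 1) * (4 * z ^ 2 + 1) : ℤ)
        = 4 * ((4 * (x * y + y * z + z * x) - 1) * w) ^ 2
          + (4 * (x * y + y * z + z * x) - 1) ^ 2 := by
      linear_combination (4 * (4 * x * y * z - x - y - z
        + (4 * (x * y + y * z + z * x) - 1) * w)) * hw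
    have hcast := congrArg (fun n : ℤ => (n : ZMod p)) hid
    push_cast at hcast h0
    have hprod : ((4 * x ^ 2 + 1 : ℤ) : ZMod p) * ((4 * y ^ 2 + 1 : ℤ) : ZMod p)
        * ((4 * z ^ 2 + 1 : ℤ) : ZMod p) = 0 := by
      push_cast
      linear_combination hcast + (4 * (4 * ((x : ZMod p) * y + (y : ZMod p) * z
        + (z : ZMod p) * x) - 1) * (w : ZMod p) ^ 2
        + (4 * ((x : ZMod p) * y + (y : ZMod p) * z + (z : ZMod p) * x) - 1)) * h0
    rcases mul_eq_zero.mp hprod with hc | hc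
    · rcases mul_eq_zero.mp hc with hc' | hc'
      · exact hsq x p pp hpq ((ZMod.intCast_zmod_eq_zero_iff_dvd _ _).mp hc')
      · exact hsq y p pp hpq ((ZMod.intCast_zmod_eq_zero_iff_dvd _ _).mp hc')
    · exact hsq z p pp hpq ((ZMod.intCast_zmod_eq_zero_iff_dvd _ _).mp hc)
  -- unit of 4S-1 and value ±1
  have hu4 : IsUnit (((4 * (x * y + y * z + z * x) - 1 : ℤ) : ZMod q)) :=
    aux_isUnit_cast q _ hS
  have hcu : IsUnit (χ (((4 * (x * y + y * z + z * x) - 1 : ℤ) : ZMod q))) := by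
    have h1 := χ.coe_toUnitHom hu4.unit
    rw [IsUnit.unit_spec] at h1
    exact h1 ▸ (χ.toUnitHom hu4.unit).isUnit
  have χsq : (χ (((4 * (x * y + y * z + z * x) - 1 : ℤ) : ZMod q))) ^ 2 = 1 := by
    rcases Int.isUnit_iff.mp hcu with h | h <;> rw [h] <;> norm_num
  -- the multiplicative identity for χ
  have hχ : χ ((4 * x ^ 2 + 1 : ℤ) : ZMod q) * χ ((4 * y ^ 2 + 1 : ℤ) : ZMod q)
      * χ ((4 * z ^ 2 + 1 : ℤ) : ZMod q) = χ ((4 * w ^ 2 + 1 : ℤ) : ZMod q) := by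
    have hid : ((4 * x ^ 2 + 1) * (4 * y ^ 2 + 1) * (4 * z ^ 2 + 1) : ℤ)
        = (4 * (x * y + y * z + z * x) - 1) ^ 2 * (4 * w ^ 2 + 1) := by
      linear_combination (4 * (4 * x * y * z - x - y - z
        + (4 * (x * y + y * z + z * x) - 1) * w)) * hw
    have hcast := congrArg (fun n : ℤ => χ ((n : ZMod q))) hid
    simp only [Int.cast_mul, Int.cast_pow, map_mul, map_pow] at hcast
    rw [hcast]
    rw [show (((4 * (x * y + y * z + z * x) - 1 : ℤ)) : ZMod q)
        = (((4 * (x * y + y * z + z * x) - 1 : ℤ) : ZMod q)) by push_cast; ring] at *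
    rw [χsq, one_mul]
  -- parity
  have heven : Even (x + y + z + w) :=
    ⟨2 * x * y * z - 2 * (x * y + y * z + z * x) * w + w, by linear_combination -hw⟩
  have h4 : ∀ t : ℤ, (-1 : ℤ) ^ t.natAbs = if t % 2 = 0 then 1 else -1 := by
    intro t
    rcases Int.even_or_odd t with h | h
    · rw [if_pos (Int.even_iff.mp h), Even.neg_one_pow (Int.natAbs_even.mpr h)]
    · rw [if_neg (by have := Int.odd_iff.mp h; omega),
        Odd.neg_one_pow (Int.natAbs_odd.mpr h)]
  have hsgn : (-1 : ℤ) ^ x.natAbs * (-1) ^ y.natAbs * (-1) ^ z.natAbs = (-1) ^ w.natAbs := by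
    rw [h4, h4, h4, h4]
    rw [Int.even_iff] at heven
    split_ifs <;> first | (exfalso; omega) | norm_num
  rw [hψ x, hψ y, hψ z, hψ w]
  rcases hr with rfl | rfl
  · simp only [Nat.zero_mul, pow_zero, one_mul]
    exact hχ
  · simp only [Nat.one_mul, one_mul]
    calc ((-1 : ℤ) ^ x.natAbs * χ ((4 * x ^ 2 + 1 : ℤ) : ZMod q))
        * ((-1) ^ y.natAbs * χ ((4 * y ^ 2 + 1 : ℤ) : ZMod q))
        * ((-1) ^ z.natAbs * χ ((4 * z ^ 2 + 1 : ℤ) : ZMod q))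
        = ((-1 : ℤ) ^ x.natAbs * (-1) ^ y.natAbs * (-1) ^ z.natAbs)
          * (χ ((4 * x ^ 2 + 1 : ℤ) : ZMod q) * χ ((4 * y ^ 2 + 1 : ℤ) : ZMod q)
            * χ ((4 * z ^ 2 + 1 : ℤ) : ZMod q)) := by ring
      _ = (-1 : ℤ) ^ w.natAbs * χ ((4 * w ^ 2 + 1 : ℤ) : ZMod q) := by rw [hsgn, hχ]
end

section
/- Let q ≥ 1 and let ψ : ℤ/qℤ → {-1,+1} satisfy ψ(x)ψ(y)ψ(z) = ψ((4xyz - x - y - z)·(4(xy+yz+zx) - 1)⁻¹) whenever 4(xy+yz+zx) - 1 is invertible in ℤ/qℤ, with ψ(0) = 1. If 4 divides q, then ψ(x + q/2) = ψ(x) for all x ∈ ℤ/qℤ. -/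
theorem stmt_17 (q : ℕ) (hq : 1 ≤ q) (h4 : 4 ∣ q)
    (ψ : ZMod q → ℤ) (hψ : ∀ x, ψ x = 1 ∨ ψ x = -1) (hψ0 : ψ 0 = 1)
    (hfe : ∀ x y z : ZMod q, IsUnit (4 * (x * y + y * z + z * x) - 1) →
      ψ x * ψ y * ψ z =
        ψ ((4 * x * y * z - x - y - z) * (4 * (x * y + y * z + z * x) - 1)⁻¹)) :
    ∀ x : ZMod q, ψ (x + ((q / 2 : ℕ) : ZMod q)) = ψ x := by
  intro x
  obtain ⟨k, hk⟩ := h4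
  have ha : (4 : ZMod q) * (k : ZMod q) = 0 := by
    have h0 : ((4 * k : ℕ) : ZMod q) = 0 := by rw [← hk]; exact ZMod.natCast_self q
    push_cast at h0
    linear_combination h0
  have hq2 : ((q / 2 : ℕ) : ZMod q) = 2 * (k : ℕ) := by
    have : q / 2 = 2 * k := by omega
    rw [this]; push_cast; ring
  have hu : IsUnit ((4 : ZMod q) * (x * (k : ZMod q) + (k : ZMod q) * (k : ZMod q) + (k : ZMod q) * x) - 1) := by
    have he : (4 : ZMod q) * (x * (k : ZMod q) + (k : ZMod q) * (k : ZMod q) + (k : ZMod q) * x) - 1 = -1 := by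
      linear_combination (2 * x + (k : ZMod q)) * ha
    rw [he]
    exact isUnit_one.neg
  have hfe' := hfe x (k : ZMod q) (k : ZMod q) hu
  have he : (4 : ZMod q) * (x * (k : ZMod q) + (k : ZMod q) * (k : ZMod q) + (k : ZMod q) * x) - 1 = -1 := by
    linear_combination (2 * x + (k : ZMod q)) * ha
  have hinv : ((-1 : ZMod q))⁻¹ = -1 := by
    have h1 := ZMod.mul_inv_of_unit (-1 : ZMod q) (isUnit_one.neg)
    linear_combination -h1
  have harg : ((4 : ZMod q) * x * (k : ZMod q) * (k : ZMod q) - x - (k : ZMod q) - (k : ZMod q)) *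
      ((4 : ZMod q) * (x * (k : ZMod q) + (k : ZMod q) * (k : ZMod q) + (k : ZMod q) * x) - 1)⁻¹
      = x + 2 * (k : ZMod q) := by
    rw [he, hinv]
    linear_combination (-(x * (k : ZMod q))) * ha
  rw [harg] at hfe'
  have hk2 : ψ (k : ZMod q) * ψ (k : ZMod q) = 1 := by
    rcases hψ (k : ZMod q) with h | h <;> rw [h] <;> ring
  push_cast at hq2
  rw [hq2]
  calc ψ (x + 2 * (k : ZMod q)) = ψ x * ψ (k : ZMod q) * ψ (k : ZMod q) := hfe'.symm
    _ = ψ x := by rw [mul_assoc, hk2, mul_one]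
end
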